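/- arXiv:0708.3357 — 5 statements merged into one kernel-verified Lean document; each statement's English description precedes it below -/
import Mathlib

section
/- For every equivariant pair (ρ,τ), the function z ↦ B(z) = ν + μ(|(∂τ/∂z)(z)|² − |(∂τ/∂z̄)(z)|²) is constant on ℂ. -/
noncomputable section

open Complex

/-- The group `G = 𝕋 ⋉ ℂ`, with elements `[a,b]`, acting on `ℂ` by `z ↦ a z + b`. -/
@[ext]
structure GT : Type where
  a : Circle
  b : ℂ

namespace GT

instance : Group GT where
  mul g h := ⟨g.a * h.a, (g.a : ℂ) * h.b + g.b⟩
  one := ⟨1, 0⟩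
  inv g := ⟨g.a⁻¹, -((g.a⁻¹ : ℂ) * g.b)⟩
  mul_assoc g h k := by
    refine GT.ext (mul_assoc _ _ _) ?_
    show ((g.a * h.a : Circle) : ℂ) * k.b + ((g.a : ℂ) * h.b + g.b)
        = (g.a : ℂ) * ((h.a : ℂ) * k.b + h.b) + g.b
    push_cast; ring
  one_mul g := by
    refine GT.ext (one_mul _) ?_
    show ((1 : Circle) : ℂ) * g.b + 0 = g.b
    simp
  mul_one g := by
    refine GT.ext (mul_one _) ?_
    show (g.a : ℂ) * 0 + g.b = g.b
    simp
  inv_mul_cancel g := by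
    refine GT.ext (inv_mul_cancel _) ?_
    show ((g.a⁻¹ : Circle) : ℂ) * g.b + -(((g.a : ℂ))⁻¹ * g.b) = 0
    push_cast; ring

/-- The action of `G` on `ℂ` : `[a,b]·z = a z + b`. -/
def act (g : GT) (z : ℂ) : ℂ := (g.a : ℂ) * z + g.b

end GT

/-- The Hermitian product `⟨z,w⟩ = z·conj w`. -/
def herm (z w : ℂ) : ℂ := z * (starRingEnd ℂ) w

/-- The automorphic factor `j^α(g,z) = exp(2 i α Im⟨z, g⁻¹·0⟩)`. -/
def jfac (α : ℝ) (g : GT) (z : ℂ) : ℂ :=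
  Complex.exp (2 * Complex.I * (α : ℂ) * ((herm z (GT.act g⁻¹ 0)).im : ℂ))

/-- The Wirtinger derivative `∂f/∂z = (1/2)(∂f/∂x − i ∂f/∂y)`. -/
def wderiv (f : ℂ → ℂ) (z : ℂ) : ℂ :=
  (1 / 2 : ℂ) * (fderiv ℝ f z 1 - Complex.I * fderiv ℝ f z Complex.I)

/-- The anti-Wirtinger derivative `∂f/∂z̄ = (1/2)(∂f/∂x + i ∂f/∂y)`. -/
def wderivBar (f : ℂ → ℂ) (z : ℂ) : ℂ :=
  (1 / 2 : ℂ) * (fderiv ℝ f z 1 + Complex.I * fderiv ℝ f z Complex.I)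

/-- The Euclidean Laplacian `Δ = 4 ∂²/∂z∂z̄`. -/
def lap (f : ℂ → ℂ) (z : ℂ) : ℂ := 4 * wderiv (fun w => wderivBar f w) z

/-- `S(z) = ν z + μ (τ(z)·∂τ̄/∂z̄(z) − τ̄(z)·∂τ/∂z̄(z))`. -/
def Sfun (ν μ : ℝ) (τ : ℂ → ℂ) (z : ℂ) : ℂ :=
  (ν : ℂ) * z + (μ : ℂ) *
    (τ z * wderivBar (fun w => (starRingEnd ℂ) (τ w)) z - (starRingEnd ℂ) (τ z) * wderivBar τ z)

/-- `B(z) = ν + μ(|∂τ/∂z(z)|² − |∂τ/∂z̄(z)|²)`. -/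
def Bfun (ν μ : ℝ) (τ : ℂ → ℂ) (z : ℂ) : ℝ :=
  ν + μ * (‖wderiv τ z‖ ^ 2 - ‖wderivBar τ z‖ ^ 2)

/-- The magnetic Schrödinger operator `L`. -/
def Lop (ν μ : ℝ) (τ : ℂ → ℂ) (f : ℂ → ℂ) (z : ℂ) : ℂ :=
  - wderiv (fun w => wderivBar f w) z
    - (Sfun ν μ τ z * wderiv f z - (starRingEnd ℂ) (Sfun ν μ τ z) * wderivBar f z)
    + ((‖Sfun ν μ τ z‖ : ℂ)) ^ 2 * f z
    - ((μ : ℂ) / 4) *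
        (τ z * lap (fun w => (starRingEnd ℂ) (τ w)) z - (starRingEnd ℂ) (τ z) * lap τ z) * f z

/-- The annihilation operator `A f = ∂f/∂z̄ + S f`. -/
def Aop (ν μ : ℝ) (τ : ℂ → ℂ) (f : ℂ → ℂ) (z : ℂ) : ℂ :=
  wderivBar f z + Sfun ν μ τ z * f z

/-- The creation operator `Ã f = −∂f/∂z + conj(S) f`. -/
def Atop (ν μ : ℝ) (τ : ℂ → ℂ) (f : ℂ → ℂ) (z : ℂ) : ℂ :=
  - wderiv f z + (starRingEnd ℂ) (Sfun ν μ τ z) * f z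

/-- `J(g,z) = j^ν(g,z)·j^μ(ρ(g),τ(z))`. -/
def Jfun (ν μ : ℝ) (ρ : GT → GT) (τ : ℂ → ℂ) (g : GT) (z : ℂ) : ℂ :=
  jfac ν g z * jfac μ (ρ g) (τ z)

/-- `φ_ρ(g,g') = Im(ν⟨g⁻¹·0,g'·0⟩ + μ⟨ρ(g⁻¹)·0, ρ(g')·0⟩)`. -/
def phiRho (ν μ : ℝ) (ρ : GT → GT) (g g' : GT) : ℝ :=
  ((ν : ℂ) * herm (GT.act g⁻¹ 0) (GT.act g' 0)
    + (μ : ℂ) * herm (GT.act (ρ g⁻¹) 0) (GT.act (ρ g') 0)).im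

/-- Membership in the lattice `Γ = ℤω₁ + ℤω₂`. -/
def inLattice (ω₁ ω₂ : ℂ) (γ : ℂ) : Prop := ∃ m n : ℤ, γ = (m : ℂ) * ω₁ + (n : ℂ) * ω₂

/-- Mixed `Γ`-automorphic form of type `(ν,μ)` w.r.t. the pair `(ρ,τ)`. -/
def MixedForm (ν μ : ℝ) (ρ : GT → GT) (τ : ℂ → ℂ) (ω₁ ω₂ : ℂ) (F : ℂ → ℂ) : Prop :=
  ContDiff ℝ (⊤ : ℕ∞) F ∧ ∀ γ : ℂ, inLattice ω₁ ω₂ γ → ∀ z : ℂ,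
    F (z + γ) = jfac (-ν) ⟨(1 : Circle), γ⟩ z * jfac (-μ) (ρ ⟨(1 : Circle), γ⟩) (τ z) * F z

/-- The Laguerre polynomial `L_k`. -/
def laguerre (k : ℕ) (x : ℝ) : ℝ :=
  ∑ j ∈ Finset.range (k + 1), (-1) ^ j * (k.choose j : ℝ) * x ^ j / (Nat.factorial j : ℝ)


/-- The multiplier `χ_τ(γ) = exp(iφ(γ) − 2iμ Im⟨τ(0), ρ([1,γ])⁻¹·0⟩)`. -/
def chiTau (μ : ℝ) (ρ : GT → GT) (τ : ℂ → ℂ) (φ : ℂ → ℝ) (γ : ℂ) : ℂ :=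
  Complex.exp (Complex.I * (φ γ : ℂ)
    - 2 * Complex.I * (μ : ℂ) * ((herm (τ 0) (GT.act (ρ ⟨1, γ⟩)⁻¹ 0)).im : ℂ))

/-- The eigenprojector kernel `K_k`. -/
def Kker (B : ℝ) (φ : ℂ → ℝ) (k : ℕ) (z w : ℂ) : ℂ :=
  ((2 * B / Real.pi : ℝ) : ℂ) * Complex.exp (-Complex.I * ((φ z - φ w : ℝ) : ℂ)) *
    Complex.exp (2 * Complex.I * (B : ℂ) * ((herm z w).im : ℂ)) *
    Complex.exp (-((B * ‖z - w‖ ^ 2 : ℝ) : ℂ)) *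
    ((laguerre k (2 * B * ‖z - w‖ ^ 2) : ℝ) : ℂ)

/-- The kernel `K^σ_ξ;k`. -/
def Kxi (σ : ℝ) (ξ : ℂ) (k : ℕ) (z w : ℂ) : ℂ :=
  ((2 * σ / Real.pi : ℝ) : ℂ) * Complex.exp (2 * Complex.I * ((herm (z - w) ξ).im : ℂ)) *
    Complex.exp (2 * Complex.I * (σ : ℂ) * ((herm z w).im : ℂ)) *
    Complex.exp (-((σ * ‖z - w‖ ^ 2 : ℝ) : ℂ)) *
    ((laguerre k (2 * σ * ‖z - w‖ ^ 2) : ℝ) : ℂ)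

/-- `m`-fold iterate of the creation operator `Ã`. -/
def AtopIter (ν μ : ℝ) (τ : ℂ → ℂ) (m : ℕ) (f : ℂ → ℂ) : ℂ → ℂ :=
  (fun u z => Atop ν μ τ u z)^[m] f


/-
Equivariance under the translations `[1,c] ∈ G` says that `τ(u + c) = a τ(u) + b` with
`|a| = 1`, where `[a,b] = ρ([1,c])`. Both Wirtinger derivatives commute with translations and are
ℂ-linear, so at `z + c` they are `a` times their values at `z`, and `B(z + c) = B(z)`.
-/

lemma wderiv_comp_add_right (f : ℂ → ℂ) (c z : ℂ) :
    wderiv (fun u => f (u + c)) z = wderiv f (z + c) := by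
  simp only [wderiv, fderiv_comp_add_right]

lemma wderivBar_comp_add_right (f : ℂ → ℂ) (c z : ℂ) :
    wderivBar (fun u => f (u + c)) z = wderivBar f (z + c) := by
  simp only [wderivBar, fderiv_comp_add_right]

lemma fderiv_const_mul_add {a : ℂ} (ha : a ≠ 0) (b : ℂ) (f : ℂ → ℂ) (z : ℂ) :
    fderiv ℝ (fun u => a * f u + b) z = a • fderiv ℝ f z := by
  let : Invertible a := invertibleOfNonzero ha
  rw [fderiv_add_const]
  exact fderiv_const_smul_of_invertible a

lemma wderiv_const_mul_add {a : ℂ} (ha : a ≠ 0) (b : ℂ) (f : ℂ → ℂ) (z : ℂ) :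
    wderiv (fun u => a * f u + b) z = a * wderiv f z := by
  simp only [wderiv, fderiv_const_mul_add ha, smul_apply, smul_eq_mul]
  ring

lemma wderivBar_const_mul_add {a : ℂ} (ha : a ≠ 0) (b : ℂ) (f : ℂ → ℂ) (z : ℂ) :
    wderivBar (fun u => a * f u + b) z = a * wderivBar f z := by
  simp only [wderivBar, fderiv_const_mul_add ha, smul_apply, smul_eq_mul]
  ring

lemma Bfun_add_eq_of_forall_add_eq (ν μ : ℝ) {τ : ℂ → ℂ} {a b c : ℂ} (ha : ‖a‖ = 1)
    (h : ∀ u, τ (u + c) = a * τ u + b) (z : ℂ) : Bfun ν μ τ (z + c) = Bfun ν μ τ z := by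
  have ha₀ : a ≠ 0 := norm_ne_zero_iff.mp (ha ▸ one_ne_zero)
  have hτ : (fun u => τ (u + c)) = fun u => a * τ u + b := funext h
  have hw : wderiv τ (z + c) = a * wderiv τ z := by
    rw [← wderiv_comp_add_right, hτ, wderiv_const_mul_add ha₀]
  have hwBar : wderivBar τ (z + c) = a * wderivBar τ z := by
    rw [← wderivBar_comp_add_right, hτ, wderivBar_const_mul_add ha₀]
  simp only [Bfun, hw, hwBar, norm_mul, ha, one_mul]

lemma GT.act_mk_one (c z : ℂ) : GT.act ⟨1, c⟩ z = z + c := by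
  simp [GT.act]

theorem statement0_general (ν μ : ℝ) (ρ : GT →* GT) (τ : ℂ → ℂ)
    (hequiv : ∀ (g : GT) (z : ℂ), τ (GT.act g z) = GT.act (ρ g) (τ z)) :
    ∀ z w : ℂ, Bfun ν μ τ z = Bfun ν μ τ w := by
  intro z w
  have htranslate : ∀ u, τ (u + (w - z)) = (ρ ⟨1, w - z⟩).a * τ u + (ρ ⟨1, w - z⟩).b := by
    intro u
    rw [← GT.act_mk_one, hequiv]
    rfl
  have hB := Bfun_add_eq_of_forall_add_eq ν μ (Circle.norm_coe _) htranslate z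
  rwa [add_sub_cancel, eq_comm] at hB

theorem statement0 (ν μ : ℝ) (hν : 0 < ν) (hμ : 0 < μ)
    (ρ : GT →* GT) (τ : ℂ → ℂ) (hτ : ContDiff ℝ (⊤ : ℕ∞) τ)
    (hequiv : ∀ (g : GT) (z : ℂ), τ (GT.act g z) = GT.act (ρ g) (τ z)) :
    ∀ z w : ℂ, Bfun ν μ τ z = Bfun ν μ τ w :=
  statement0_general ν μ ρ τ hequiv
end
end

section
/- Let ν, μ be reals and τ : ℂ → ℂ a C^∞ map. Define the first-order operators (Af)(z) = (∂f/∂z̄)(z) + S(z)f(z) and (Ãf)(z) = −(∂f/∂z)(z) + conj(S(z))f(z). Then for every C^∞ function f : ℂ → ℂ and every z ∈ ℂ one has the supersymmetric relations (Ã(Af))(z) + B(z)f(z) = (Lf)(z) and (A(Ãf))(z) − B(z)f(z) = (Lf)(z). -/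
noncomputable section

open Complex

/-!
Expanding `ÃA` and `AÃ` with the Leibniz rule for the Wirtinger derivatives reproduces every
term of `L` except the zeroth-order ones, `-(∂S)f` and `(∂̄S̄)f = conj(∂S) f`. The identity
`∂S = B + (μ/4)(τΔτ̄ - τ̄Δτ)` settles both: the first-order part of `∂(τ∂̄τ̄ - τ̄∂̄τ)` is
`|∂τ|² - |∂̄τ|²` because `∂̄τ̄ = conj ∂τ`, and its second-order part is the potential term since
`Δ = 4∂∂̄`. As `∂` and `∂̄` commute on `C²` functions, `Δ` commutes with conjugation, so the
potential term is purely imaginary while `B` is real.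
-/

open ComplexConjugate

section Wirtinger

variable {f g : ℂ → ℂ} {z : ℂ}

theorem wderiv_fun_add (hf : DifferentiableAt ℝ f z) (hg : DifferentiableAt ℝ g z) :
    wderiv (fun w => f w + g w) z = wderiv f z + wderiv g z := by
  simp only [wderiv, fderiv_fun_add hf hg, add_apply]
  ring

theorem wderiv_fun_sub (hf : DifferentiableAt ℝ f z) (hg : DifferentiableAt ℝ g z) :
    wderiv (fun w => f w - g w) z = wderiv f z - wderiv g z := by
  simp only [wderiv, fderiv_fun_sub hf hg, sub_apply]
  ring

theorem wderiv_fun_mul (hf : DifferentiableAt ℝ f z) (hg : DifferentiableAt ℝ g z) :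
    wderiv (fun w => f w * g w) z = f z * wderiv g z + g z * wderiv f z := by
  simp only [wderiv, fderiv_fun_mul hf hg, add_apply, smul_apply, smul_eq_mul]
  ring

theorem wderiv_fun_const_mul (c : ℂ) (hf : DifferentiableAt ℝ f z) :
    wderiv (fun w => c * f w) z = c * wderiv f z := by
  simp only [wderiv, fderiv_const_mul hf, smul_apply, smul_eq_mul]
  ring

theorem wderiv_fun_id : wderiv (fun w => w) z = 1 := by
  simp only [wderiv, fderiv_fun_id, ContinuousLinearMap.id_apply, I_mul_I]
  ring

theorem wderivBar_fun_add (hf : DifferentiableAt ℝ f z) (hg : DifferentiableAt ℝ g z) :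
    wderivBar (fun w => f w + g w) z = wderivBar f z + wderivBar g z := by
  simp only [wderivBar, fderiv_fun_add hf hg, add_apply]
  ring

theorem wderivBar_fun_neg : wderivBar (fun w => -f w) z = -wderivBar f z := by
  simp only [wderivBar, fderiv_fun_neg, neg_apply]
  ring

theorem wderivBar_fun_mul (hf : DifferentiableAt ℝ f z) (hg : DifferentiableAt ℝ g z) :
    wderivBar (fun w => f w * g w) z = f z * wderivBar g z + g z * wderivBar f z := by
  simp only [wderivBar, fderiv_fun_mul hf hg, add_apply, smul_apply, smul_eq_mul]
  ring

theorem fderiv_conj_apply (f : ℂ → ℂ) (z v : ℂ) :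
    fderiv ℝ (fun w => conj (f w)) z v = conj (fderiv ℝ f z v) := by
  change fderiv ℝ (conjLIE ∘ f) z v = _
  rw [conjLIE.comp_fderiv]
  rfl

theorem wderiv_conj (f : ℂ → ℂ) (z : ℂ) :
    wderiv (fun w => conj (f w)) z = conj (wderivBar f z) := by
  simp only [wderiv, wderivBar, fderiv_conj_apply, map_mul, map_add, conj_I, map_div₀, map_one,
    map_ofNat]
  ring

theorem wderivBar_conj (f : ℂ → ℂ) (z : ℂ) :
    wderivBar (fun w => conj (f w)) z = conj (wderiv f z) := by
  simp only [wderiv, wderivBar, fderiv_conj_apply, map_mul, map_sub, conj_I, map_div₀, map_one,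
    map_ofNat]
  ring

theorem ContDiffAt.wderiv {n : WithTop ℕ∞} (hf : ContDiffAt ℝ (n + 1) f z) :
    ContDiffAt ℝ n (wderiv f) z := by
  have hDf := hf.fderiv_right_succ
  exact contDiffAt_const.mul ((hDf.clm_apply contDiffAt_const).sub
    (contDiffAt_const.mul (hDf.clm_apply contDiffAt_const)))

theorem ContDiffAt.wderivBar {n : WithTop ℕ∞} (hf : ContDiffAt ℝ (n + 1) f z) :
    ContDiffAt ℝ n (wderivBar f) z := by
  have hDf := hf.fderiv_right_succ
  exact contDiffAt_const.mul ((hDf.clm_apply contDiffAt_const).add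
    (contDiffAt_const.mul (hDf.clm_apply contDiffAt_const)))

theorem ContDiffAt.conj {n : WithTop ℕ∞} (hf : ContDiffAt ℝ n f z) :
    ContDiffAt ℝ n (fun w => conj (f w)) z :=
  conjLIE.contDiff.contDiffAt.comp z hf

theorem fderiv_wderivBar_apply (hf : DifferentiableAt ℝ (fderiv ℝ f) z) (v : ℂ) :
    fderiv ℝ (wderivBar f) z v
      = 1 / 2 * (fderiv ℝ (fderiv ℝ f) z v 1 + I * fderiv ℝ (fderiv ℝ f) z v I) := by
  have hDf := hf.hasFDerivAt
  have h : HasFDerivAt (wderivBar f) _ z :=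
    ((hDf.clm_apply (hasFDerivAt_const (1 : ℂ) z)).fun_add
      ((hDf.clm_apply (hasFDerivAt_const I z)).const_mul I)).const_mul (1 / 2 : ℂ)
  rw [h.fderiv]
  simp only [one_div, ContinuousLinearMap.comp_zero, zero_add, smul_add, add_apply, smul_apply,
    ContinuousLinearMap.flip_apply, smul_eq_mul]
  ring

theorem fderiv_wderiv_apply (hf : DifferentiableAt ℝ (fderiv ℝ f) z) (v : ℂ) :
    fderiv ℝ (wderiv f) z v
      = 1 / 2 * (fderiv ℝ (fderiv ℝ f) z v 1 - I * fderiv ℝ (fderiv ℝ f) z v I) := by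
  have hDf := hf.hasFDerivAt
  have h : HasFDerivAt (wderiv f) _ z :=
    ((hDf.clm_apply (hasFDerivAt_const (1 : ℂ) z)).fun_sub
      ((hDf.clm_apply (hasFDerivAt_const I z)).const_mul I)).const_mul (1 / 2 : ℂ)
  rw [h.fderiv]
  simp only [one_div, ContinuousLinearMap.comp_zero, zero_add, smul_apply, sub_apply,
    ContinuousLinearMap.flip_apply, smul_eq_mul]

theorem wderivBar_wderiv_comm (hf : ContDiffAt ℝ 2 f z) :
    wderivBar (wderiv f) z = wderiv (wderivBar f) z := by
  have hDf : DifferentiableAt ℝ (fderiv ℝ f) z :=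
    (hf.fderiv_right (m := 1) le_rfl).differentiableAt one_ne_zero
  have hsymm := (hf.isSymmSndFDerivAt (by simp)).eq 1 I
  simp only [wderiv, wderivBar, fderiv_wderiv_apply hDf, fderiv_wderivBar_apply hDf, hsymm]
  ring

theorem lap_conj (hf : ContDiffAt ℝ 2 f z) :
    lap (fun w => conj (f w)) z = conj (lap f z) := by
  simp only [lap, wderivBar_conj, wderiv_conj, wderivBar_wderiv_comm hf, map_mul, map_ofNat]

end Wirtinger

section Supersymmetry

variable {ν μ : ℝ} {τ f : ℂ → ℂ} {z : ℂ}

theorem differentiableAt_Sfun (hτ : ContDiffAt ℝ 2 τ z) :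
    DifferentiableAt ℝ (Sfun ν μ τ) z := by
  have hτc : ContDiffAt ℝ 2 (fun w => conj (τ w)) z := hτ.conj
  have h1 := (hτ.wderivBar (n := 1)).differentiableAt one_ne_zero
  have h2 := (hτc.wderivBar (n := 1)).differentiableAt one_ne_zero
  exact (differentiableAt_fun_id.const_mul _).fun_add
    ((((hτ.differentiableAt two_ne_zero).fun_mul h2).fun_sub
      ((hτc.differentiableAt two_ne_zero).fun_mul h1)).const_mul _)

theorem wderiv_Sfun (hτ : ContDiffAt ℝ 2 τ z) :
    wderiv (Sfun ν μ τ) z = Bfun ν μ τ z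
      + μ / 4 * (τ z * lap (fun w => conj (τ w)) z - conj (τ z) * lap τ z) := by
  have hτc : ContDiffAt ℝ 2 (fun w => conj (τ w)) z := hτ.conj
  have dτ : DifferentiableAt ℝ τ z := hτ.differentiableAt two_ne_zero
  have dτc : DifferentiableAt ℝ (fun w => conj (τ w)) z := hτc.differentiableAt two_ne_zero
  have d1 := (hτ.wderivBar (n := 1)).differentiableAt one_ne_zero
  have d2 := (hτc.wderivBar (n := 1)).differentiableAt one_ne_zero
  rw [show Sfun ν μ τ = fun w => (ν : ℂ) * w + μ * (τ w * wderivBar (fun u => conj (τ u)) w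
      - conj (τ w) * wderivBar τ w) from rfl,
    wderiv_fun_add (differentiableAt_fun_id.const_mul _)
      (((dτ.fun_mul d2).fun_sub (dτc.fun_mul d1)).const_mul _),
    wderiv_fun_const_mul _ differentiableAt_fun_id, wderiv_fun_id,
    wderiv_fun_const_mul _ ((dτ.fun_mul d2).fun_sub (dτc.fun_mul d1)),
    wderiv_fun_sub (dτ.fun_mul d2) (dτc.fun_mul d1), wderiv_fun_mul dτ d2,
    wderiv_fun_mul dτc d1, wderivBar_conj, wderiv_conj, Bfun, lap, lap]
  push_cast
  rw [← mul_conj', ← mul_conj']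
  ring

theorem wderivBar_conj_Sfun (hτ : ContDiffAt ℝ 2 τ z) :
    wderivBar (fun w => conj (Sfun ν μ τ w)) z = Bfun ν μ τ z
      - μ / 4 * (τ z * lap (fun w => conj (τ w)) z - conj (τ z) * lap τ z) := by
  rw [wderivBar_conj, wderiv_Sfun hτ, lap_conj hτ]
  simp only [map_add, map_sub, map_mul, map_div₀, conj_ofReal, conj_conj, map_ofNat]
  ring

theorem Atop_Aop_apply (hτ : ContDiffAt ℝ 2 τ z) (hf : ContDiffAt ℝ 2 f z) :
    Atop ν μ τ (fun w => Aop ν μ τ f w) z = Lop ν μ τ f z - Bfun ν μ τ z * f z := by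
  have df : DifferentiableAt ℝ f z := hf.differentiableAt two_ne_zero
  have dS : DifferentiableAt ℝ (Sfun ν μ τ) z := differentiableAt_Sfun hτ
  simp only [Atop, Aop, Lop]
  rw [wderiv_fun_add ((hf.wderivBar (n := 1)).differentiableAt one_ne_zero) (dS.fun_mul df),
    wderiv_fun_mul dS df, wderiv_Sfun hτ, ← mul_conj']
  ring

theorem Aop_Atop_apply (hτ : ContDiffAt ℝ 2 τ z) (hf : ContDiffAt ℝ 2 f z) :
    Aop ν μ τ (fun w => Atop ν μ τ f w) z = Lop ν μ τ f z + Bfun ν μ τ z * f z := by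
  have df : DifferentiableAt ℝ f z := hf.differentiableAt two_ne_zero
  have dS : DifferentiableAt ℝ (fun w => conj (Sfun ν μ τ w)) z :=
    (differentiableAt_Sfun hτ).star
  simp only [Atop, Aop, Lop]
  rw [wderivBar_fun_add ((hf.wderiv (n := 1)).differentiableAt one_ne_zero).fun_neg
      (dS.fun_mul df),
    wderivBar_fun_neg, wderivBar_fun_mul dS df, wderivBar_conj_Sfun hτ, wderivBar_wderiv_comm hf,
    ← mul_conj']
  ring

end Supersymmetry

theorem statement1 (ν μ : ℝ) (τ : ℂ → ℂ) (hτ : ContDiff ℝ (⊤ : ℕ∞) τ)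
    (f : ℂ → ℂ) (hf : ContDiff ℝ (⊤ : ℕ∞) f) (z : ℂ) :
    Atop ν μ τ (fun w => Aop ν μ τ f w) z + (Bfun ν μ τ z : ℂ) * f z = Lop ν μ τ f z ∧
    Aop ν μ τ (fun w => Atop ν μ τ f w) z - (Bfun ν μ τ z : ℂ) * f z = Lop ν μ τ f z := by
  have hτ2 : ContDiffAt ℝ 2 τ z := hτ.contDiffAt.of_le (WithTop.coe_le_coe.mpr le_top)
  have hf2 : ContDiffAt ℝ 2 f z := hf.contDiffAt.of_le (WithTop.coe_le_coe.mpr le_top)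
  rw [Atop_Aop_apply hτ2 hf2, Aop_Atop_apply hτ2 hf2]
  constructor <;> ring
end
end

section
/- For every α ∈ ℝ, all h, h' ∈ G and every w ∈ ℂ, the automorphic factor satisfies j^α(hh', w) = exp(2iα·Im⟨h⁻¹·0, h'·0⟩)·j^α(h, h'·w)·j^α(h', w). -/
noncomputable section

open Complex

/-!
Since `Im⟨·,·⟩` is a rotation-invariant real symplectic form, conjugating by
`h' = [c,d]` gives `Im⟨w, h'⁻¹·p⟩ = Im⟨h'·w - d, p - d⟩`. Expanding this bilinearly with
`p = h⁻¹·0`, and using `(hh')⁻¹·0 = h'⁻¹·(h⁻¹·0)`, splits the exponent of `j^α(hh', w)`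
into the three exponents on the right-hand side.
-/

lemma Circle.coe_mul_conj (a : Circle) : (a : ℂ) * (starRingEnd ℂ) (a : ℂ) = 1 := by
  rw [Complex.mul_conj, Circle.normSq_coe, Complex.ofReal_one]

namespace GT

lemma act_mul (g h : GT) (z : ℂ) : act (g * h) z = act g (act h z) := by
  change ((g.a * h.a : Circle) : ℂ) * z + ((g.a : ℂ) * h.b + g.b) = _
  simp only [act, Circle.coe_mul]
  ring

lemma act_inv (g : GT) (z : ℂ) : act g⁻¹ z = (starRingEnd ℂ) (g.a : ℂ) * (z - g.b) := by
  change ((g.a⁻¹ : Circle) : ℂ) * z + -(((g.a⁻¹ : Circle) : ℂ) * g.b) = _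
  rw [Circle.coe_inv_eq_conj]
  ring

end GT

lemma herm_circle_mul (a : Circle) (z w : ℂ) : herm (a * z) (a * w) = herm z w := by
  simp only [herm, map_mul]
  linear_combination z * (starRingEnd ℂ) w * Circle.coe_mul_conj a

lemma herm_act_inv_right (g : GT) (w p : ℂ) :
    herm w (GT.act g⁻¹ p) = herm (GT.act g w - g.b) (p - g.b) := by
  rw [GT.act_inv, ← herm_circle_mul g.a, ← mul_assoc, Circle.coe_mul_conj, one_mul]
  congr 1
  rw [GT.act]
  ring

lemma im_herm_sub_sub (x p b : ℂ) :
    (herm (x - b) (p - b)).im = (herm x p).im + (herm (x - b) (-b)).im + (herm p b).im := by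
  simp only [herm, mul_im, sub_re, sub_im, neg_re, neg_im, conj_re, conj_im]
  ring

lemma im_herm_act_inv (g : GT) (w p : ℂ) :
    (herm w (GT.act g⁻¹ p)).im
      = (herm (GT.act g w) p).im + (herm w (GT.act g⁻¹ 0)).im + (herm p (GT.act g 0)).im := by
  rw [herm_act_inv_right, herm_act_inv_right, zero_sub, im_herm_sub_sub]
  simp [GT.act]

theorem statement5 (α : ℝ) (h h' : GT) (w : ℂ) :
    jfac α (h * h') w
      = Complex.exp (2 * Complex.I * (α : ℂ) * ((herm (GT.act h⁻¹ 0) (GT.act h' 0)).im : ℂ)) *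
          jfac α h (GT.act h' w) * jfac α h' w := by
  have cocycle : (herm w (GT.act (h * h')⁻¹ 0)).im
      = (herm (GT.act h⁻¹ 0) (GT.act h' 0)).im + (herm (GT.act h' w) (GT.act h⁻¹ 0)).im
        + (herm w (GT.act h'⁻¹ 0)).im := by
    rw [mul_inv_rev, GT.act_mul, im_herm_act_inv]
    ring
  rw [jfac, jfac, jfac, ← Complex.exp_add, ← Complex.exp_add, cocycle]
  push_cast
  congr 1
  ring
end
end

section
/- The space M^{ν,μ}_τ(ℂ) of mixed Γ-automorphic forms of type (ν,μ) contains a nonzero function if and only if (1/π)·φ_ρ(γ,γ') is an integer for all γ, γ' ∈ Γ. -/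
noncomputable section

open Complex

/-!
Translations are commutators in `G = 𝕋 ⋉ ℂ`, so `ρ` maps `[1,γ]` to a translation `[1,ψ γ]`
with `ψ` additive and `τ (z + γ) = τ z + ψ γ`. The factor of automorphy along `γ` is then
`exp (2 i S(γ,z))` with `S` real and `S(γ+γ',z) = S(γ',z+γ) + S(γ,z) + φ_ρ(γ,γ')`.
A form that does not vanish at one point forces `exp (2 i φ_ρ(γ,γ')) = 1`, i.e. `φ_ρ/π ∈ ℤ`.
Conversely, when this holds the factor is a cocycle, and the Poincaré series over `Γ` of a bump
function supported in a ball meeting `Γ` only at `0` is a smooth nonzero form.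
-/
open scoped commutatorElement

namespace GT

@[simp] lemma mul_a (g h : GT) : (g * h).a = g.a * h.a := rfl
@[simp] lemma mul_b (g h : GT) : (g * h).b = (g.a : ℂ) * h.b + g.b := rfl
@[simp] lemma inv_a (g : GT) : g⁻¹.a = g.a⁻¹ := rfl
@[simp] lemma inv_b (g : GT) : g⁻¹.b = -((g.a⁻¹ : ℂ) * g.b) := rfl
@[simp] lemma act_zero (g : GT) : act g 0 = g.b := by simp [act]

lemma translation_mul_translation (b c : ℂ) : (⟨1, b⟩ : GT) * ⟨1, c⟩ = ⟨1, b + c⟩ := by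
  ext <;> simp [add_comm]

@[simp] lemma translation_inv (b : ℂ) : (⟨1, b⟩ : GT)⁻¹ = ⟨1, -b⟩ := by
  ext <;> simp

lemma translation_eq_commutator (b : ℂ) : (⟨1, b⟩ : GT) = ⁅(⟨-1, 0⟩ : GT), ⟨1, -b / 2⟩⁆ := by
  ext
  · simp [commutatorElement_def]
  · simp [commutatorElement_def]; ring

def rotation : GT →* Circle where
  toFun g := g.a
  map_one' := rfl
  map_mul' _ _ := rfl

end GT

lemma MonoidHom.map_translation_a (ρ : GT →* GT) (b : ℂ) : (ρ ⟨1, b⟩).a = 1 := by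
  -- `[1,b]` is a commutator, so the rotation part of its image lies in `[𝕋, 𝕋] = 1`.
  change (GT.rotation.comp ρ) ⟨1, b⟩ = 1
  rw [GT.translation_eq_commutator, map_commutatorElement, commutatorElement_eq_one_iff_commute]
  exact Commute.all _ _

def psi (ρ : GT →* GT) : ℂ →+ ℂ :=
  AddMonoidHom.mk' (fun b => (ρ ⟨1, b⟩).b) fun b c => by
    rw [← GT.translation_mul_translation, map_mul, GT.mul_b, ρ.map_translation_a]
    simp [add_comm]

lemma map_translation (ρ : GT →* GT) (b : ℂ) : ρ ⟨1, b⟩ = ⟨1, psi ρ b⟩ :=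
  GT.ext (ρ.map_translation_a b) rfl

def IsEquivariant (ρ : GT →* GT) (τ : ℂ → ℂ) : Prop :=
  ∀ (g : GT) (z : ℂ), τ (GT.act g z) = GT.act (ρ g) (τ z)

lemma IsEquivariant.map_add {ρ : GT →* GT} {τ : ℂ → ℂ} (hequiv : IsEquivariant ρ τ) (z b : ℂ) :
    τ (z + b) = τ z + psi ρ b := by
  simpa [GT.act, map_translation, add_comm] using hequiv ⟨1, b⟩ z

lemma herm_add_left (a b c : ℂ) : herm (a + b) c = herm a c + herm b c := add_mul _ _ _

lemma herm_add_right (a b c : ℂ) : herm a (b + c) = herm a b + herm a c := by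
  simp [herm, mul_add]

lemma exp_two_mul_I_mul_ofReal_eq_one_iff (x : ℝ) :
    exp (2 * I * x) = 1 ↔ ∃ n : ℤ, 1 / Real.pi * x = n := by
  rw [Complex.exp_eq_one_iff]
  refine exists_congr fun n => ?_
  rw [one_div_mul_eq_div, div_eq_iff Real.pi_ne_zero, ← Complex.ofReal_inj]
  push_cast
  constructor <;> intro h
  · linear_combination (-I / 2) * h + (x - n * Real.pi) * I_sq
  · linear_combination 2 * I * h

section TranslationFactor

variable (ν μ : ℝ) (ρ : GT →* GT) (τ : ℂ → ℂ)

def autExponent (b z : ℂ) : ℝ := ν * (herm z b).im + μ * (herm (τ z) (psi ρ b)).im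

def translationFactor (b z : ℂ) : ℂ := jfac (-ν) ⟨1, b⟩ z * jfac (-μ) (ρ ⟨1, b⟩) (τ z)

lemma translationFactor_eq_exp (b z : ℂ) :
    translationFactor ν μ ρ τ b z = exp (2 * I * autExponent ν μ ρ τ b z) := by
  simp only [translationFactor, jfac, autExponent, map_translation, ← Complex.exp_add]
  congr 1
  simp only [herm, GT.translation_inv, GT.act_zero, map_neg, mul_neg, neg_im]
  push_cast
  ring

lemma phiRho_translation (γ γ' : ℂ) :
    phiRho ν μ ρ ⟨1, γ⟩ ⟨1, γ'⟩ = -(ν * (herm γ γ').im + μ * (herm (psi ρ γ) (psi ρ γ')).im) := by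
  simp only [phiRho, herm, GT.translation_inv, map_translation, GT.act_zero, map_neg,
    neg_mul, add_im, neg_im, im_ofReal_mul]
  ring

lemma autExponent_add (hequiv : IsEquivariant ρ τ) (γ γ' z : ℂ) :
    autExponent ν μ ρ τ (γ + γ') z
      = autExponent ν μ ρ τ γ' (z + γ) + autExponent ν μ ρ τ γ z
        + phiRho ν μ ρ ⟨1, γ⟩ ⟨1, γ'⟩ := by
  simp only [autExponent, phiRho_translation, hequiv.map_add, map_add,
    herm_add_left, herm_add_right, add_im]
  ring

lemma translationFactor_add (hequiv : IsEquivariant ρ τ) (γ γ' z : ℂ) :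
    translationFactor ν μ ρ τ (γ + γ') z
      = exp (2 * I * phiRho ν μ ρ ⟨1, γ⟩ ⟨1, γ'⟩)
        * (translationFactor ν μ ρ τ γ' (z + γ) * translationFactor ν μ ρ τ γ z) := by
  simp only [translationFactor_eq_exp, autExponent_add ν μ ρ τ hequiv, ← Complex.exp_add]
  push_cast
  congr 1
  ring

lemma contDiff_translationFactor {n : WithTop ℕ∞} (hτ : ContDiff ℝ n τ) (b : ℂ) :
    ContDiff ℝ n (translationFactor ν μ ρ τ b) := by
  have hexp : ContDiff ℝ n (autExponent ν μ ρ τ b) := by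
    change ContDiff ℝ n fun z =>
      ν * imCLM (z * starRingEnd ℂ b) + μ * imCLM (τ z * starRingEnd ℂ (psi ρ b))
    fun_prop
  simp only [funext (translationFactor_eq_exp ν μ ρ τ b), ← Complex.ofRealCLM_apply]
  fun_prop

lemma translationFactor_add_eq_iff (hequiv : IsEquivariant ρ τ) (γ γ' z : ℂ) :
    translationFactor ν μ ρ τ (γ + γ') z
        = translationFactor ν μ ρ τ γ' (z + γ) * translationFactor ν μ ρ τ γ z ↔
      ∃ n : ℤ, 1 / Real.pi * phiRho ν μ ρ ⟨1, γ⟩ ⟨1, γ'⟩ = n := by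
  rw [translationFactor_add ν μ ρ τ hequiv, mul_eq_right₀ (by simp [translationFactor_eq_exp]),
    exp_two_mul_I_mul_ofReal_eq_one_iff]

end TranslationFactor

section Multiplier

variable {E : Type*} [AddCommGroup E]

def IsMultiplier (Λ : AddSubgroup E) (e : E → E → ℂ) : Prop :=
  ∀ γ ∈ Λ, ∀ γ' ∈ Λ, ∀ z, e (γ + γ') z = e γ' (z + γ) * e γ z

lemma multiplier_add_of_automorphic {Λ : AddSubgroup E} {e : E → E → ℂ} {F : E → ℂ}
    (hF : ∀ γ ∈ Λ, ∀ z, F (z + γ) = e γ z * F z) {γ γ' : E} (hγ : γ ∈ Λ) (hγ' : γ' ∈ Λ) {z : E}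
    (hz : F z ≠ 0) : e (γ + γ') z = e γ' (z + γ) * e γ z := by
  refine mul_right_cancel₀ hz ?_
  rw [← hF _ (Λ.add_mem hγ hγ'), mul_assoc, ← hF γ hγ, ← hF γ' hγ', add_assoc]

def poincareSum (Λ : AddSubgroup E) (e : E → E → ℂ) (f : E → ℂ) (z : E) : ℂ :=
  ∑ᶠ γ : Λ, e γ (z - γ) * f (z - γ)

variable {Λ : AddSubgroup E} {e : E → E → ℂ} {f : E → ℂ}

lemma poincareSum_add (he : IsMultiplier Λ e) {γ : E} (hγ : γ ∈ Λ) (z : E) :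
    poincareSum Λ e f (z + γ) = e γ z * poincareSum Λ e f z := by
  rw [poincareSum, poincareSum, mul_finsum, ← finsum_comp_equiv (Equiv.addRight ⟨γ, hγ⟩)]
  refine finsum_congr fun δ => ?_
  have hδ : z + γ - ↑(δ + ⟨γ, hγ⟩) = z - δ := by push_cast; abel
  rw [Equiv.coe_addRight, hδ, AddSubgroup.coe_add, he δ δ.2 γ hγ, sub_add_cancel, mul_assoc]

lemma poincareSum_zero (hf : ∀ γ ∈ Λ, γ ≠ 0 → f (-γ) = 0) :
    poincareSum Λ e f 0 = e 0 0 * f 0 := by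
  rw [poincareSum, finsum_eq_single _ 0 fun γ hγ => ?_]
  · simp
  · rw [zero_sub, hf γ γ.2 (by exact_mod_cast hγ), mul_zero]

end Multiplier

section PoincareSum

variable {E : Type*} [NormedAddCommGroup E] {Λ : AddSubgroup E}

lemma exists_pos_le_norm_of_discrete [DiscreteTopology Λ] :
    ∃ r > 0, ∀ γ ∈ Λ, γ ≠ 0 → r ≤ ‖γ‖ := by
  obtain ⟨r, hr, h⟩ := Metric.isOpen_singleton_iff.mp (isOpen_discrete ({0} : Set Λ))
  refine ⟨r, hr, fun γ hγ hγ0 => not_lt.mp fun hlt => hγ0 ?_⟩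
  simpa using h ⟨γ, hγ⟩ (by simpa using hlt)

variable [NormedSpace ℝ E] [FiniteDimensional ℝ E] [DiscreteTopology Λ] {e : E → E → ℂ}
  {f : E → ℂ}

lemma locallyFinite_support_poincareTerm (hf : HasCompactSupport f) :
    LocallyFinite fun γ : Λ => Function.support fun z => e γ (z - γ) * f (z - γ) := by
  obtain ⟨R, hR⟩ := hf.isCompact.isBounded.subset_closedBall 0
  intro x
  refine ⟨Metric.ball x 1, Metric.ball_mem_nhds x one_pos, ?_⟩
  have hfin : (Metric.closedBall x (R + 1) ∩ (Λ : Set E)).Finite :=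
    Metric.finite_isBounded_inter_isClosed DiscreteTopology.isDiscrete Metric.isBounded_closedBall
      AddSubgroup.isClosed_of_discrete
  refine (hfin.preimage Subtype.val_injective.injOn).subset ?_
  rintro γ ⟨y, hy, hyx⟩
  refine ⟨?_, γ.2⟩
  have hyγ : ‖y - γ‖ ≤ R := by
    simpa using hR (subset_tsupport f (right_ne_zero_of_mul hy))
  rw [Metric.mem_closedBall, dist_comm, dist_eq_norm]
  rw [Metric.mem_ball, dist_eq_norm] at hyx
  calc ‖x - γ‖ = ‖(y - γ) - (y - x)‖ := by congr 1; abel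
    _ ≤ ‖y - γ‖ + ‖y - x‖ := norm_sub_le _ _
    _ ≤ R + 1 := by linarith

lemma contDiff_poincareSum {n : WithTop ℕ∞} (he : ∀ γ ∈ Λ, ContDiff ℝ n (e γ))
    (hf : ContDiff ℝ n f) (hfc : HasCompactSupport f) :
    ContDiff ℝ n (poincareSum Λ e f) := by
  rw [← contMDiff_iff_contDiff]
  refine contMDiff_finsum (fun γ => ?_) (locallyFinite_support_poincareTerm hfc)
  rw [contMDiff_iff_contDiff]
  exact ((he γ γ.2).comp (contDiff_id.sub contDiff_const)).mul
    (hf.comp (contDiff_id.sub contDiff_const))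

theorem exists_automorphic_of_isMultiplier {n : ℕ∞} (he : IsMultiplier Λ e)
    (he_smooth : ∀ γ ∈ Λ, ContDiff ℝ n (e γ)) (he0 : e 0 0 ≠ 0) :
    ∃ F : E → ℂ, ContDiff ℝ n F ∧ F ≠ 0 ∧ ∀ γ ∈ Λ, ∀ z, F (z + γ) = e γ z * F z := by
  obtain ⟨r, hr, hΛ⟩ := exists_pos_le_norm_of_discrete (Λ := Λ)
  let β : ContDiffBump (0 : E) := ⟨r / 2, r, half_pos hr, half_lt_self hr⟩
  let f : E → ℂ := fun z => β z
  have hf : ∀ γ ∈ Λ, γ ≠ 0 → f (-γ) = 0 := fun γ hγ hγ0 => by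
    simp [f, β.zero_of_le_dist (x := -γ) (by simpa using hΛ γ hγ hγ0)]
  refine ⟨poincareSum Λ e f, contDiff_poincareSum he_smooth ?_ ?_, fun h => ?_,
    fun γ hγ => poincareSum_add he hγ⟩
  · exact ofRealCLM.contDiff.comp β.contDiff
  · exact β.hasCompactSupport.comp_left ofReal_zero
  · have h0 := congrFun h 0
    rw [poincareSum_zero hf] at h0
    simp [f, β.one_of_mem_closedBall (Metric.mem_closedBall_self (half_pos hr).le), he0] at h0

end PoincareSum

def latticeSubgroup (ω₁ ω₂ : ℂ) : AddSubgroup ℂ := (Submodule.span ℤ {ω₁, ω₂}).toAddSubgroup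

lemma mem_latticeSubgroup {ω₁ ω₂ γ : ℂ} : γ ∈ latticeSubgroup ω₁ ω₂ ↔ inLattice ω₁ ω₂ γ := by
  simp only [latticeSubgroup, Submodule.mem_toAddSubgroup, Submodule.mem_span_pair, zsmul_eq_mul,
    inLattice, eq_comm]

lemma discreteTopology_latticeSubgroup {ω₁ ω₂ : ℂ} (hω : LinearIndependent ℝ ![ω₁, ω₂]) :
    DiscreteTopology (latticeSubgroup ω₁ ω₂) := by
  let b := basisOfLinearIndependentOfCardEqFinrank hω (by simp)
  have hb : Set.range b = {ω₁, ω₂} := by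
    rw [coe_basisOfLinearIndependentOfCardEqFinrank, Matrix.range_cons_cons_empty]
  have : DiscreteTopology (Submodule.span ℤ (Set.range b)).toAddSubgroup := inferInstance
  rwa [hb] at this

theorem statement6_general (ν μ : ℝ)
    (ρ : GT →* GT) (τ : ℂ → ℂ) (hτ : ContDiff ℝ (⊤ : ℕ∞) τ)
    (hequiv : ∀ (g : GT) (z : ℂ), τ (GT.act g z) = GT.act (ρ g) (τ z))
    (ω₁ ω₂ : ℂ) (hω : LinearIndependent ℝ ![ω₁, ω₂]) :
    (∃ F : ℂ → ℂ, MixedForm ν μ (⇑ρ) τ ω₁ ω₂ F ∧ F ≠ 0) ↔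
      (∀ γ γ' : ℂ, inLattice ω₁ ω₂ γ → inLattice ω₁ ω₂ γ' →
        ∃ n : ℤ, (1 / Real.pi) * phiRho ν μ (⇑ρ) ⟨1, γ⟩ ⟨1, γ'⟩ = (n : ℝ)) := by
  constructor
  · rintro ⟨F, ⟨-, hF⟩, hF0⟩ γ γ' hγ hγ'
    obtain ⟨z, hz⟩ := Function.ne_iff.mp hF0
    refine (translationFactor_add_eq_iff ν μ ρ τ hequiv γ γ' z).mp ?_
    exact multiplier_add_of_automorphic (Λ := latticeSubgroup ω₁ ω₂)
      (fun γ hγ => hF γ (mem_latticeSubgroup.mp hγ)) (mem_latticeSubgroup.mpr hγ)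
      (mem_latticeSubgroup.mpr hγ') hz
  · intro hint
    have := discreteTopology_latticeSubgroup hω
    have he : IsMultiplier (latticeSubgroup ω₁ ω₂) (translationFactor ν μ ρ τ) :=
      fun γ hγ γ' hγ' z => (translationFactor_add_eq_iff ν μ ρ τ hequiv γ γ' z).mpr
        (hint γ γ' (mem_latticeSubgroup.mp hγ) (mem_latticeSubgroup.mp hγ'))
    obtain ⟨F, hFs, hF0, hF⟩ := exists_automorphic_of_isMultiplier he
      (fun γ _ => contDiff_translationFactor ν μ ρ τ hτ γ) (by simp [translationFactor_eq_exp])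
    exact ⟨F, ⟨hFs, fun γ hγ => hF γ (mem_latticeSubgroup.mpr hγ)⟩, hF0⟩

theorem statement6 (ν μ : ℝ) (hν : 0 < ν) (hμ : 0 < μ)
    (ρ : GT →* GT) (τ : ℂ → ℂ) (hτ : ContDiff ℝ (⊤ : ℕ∞) τ)
    (hequiv : ∀ (g : GT) (z : ℂ), τ (GT.act g z) = GT.act (ρ g) (τ z))
    (ω₁ ω₂ : ℂ) (hω : LinearIndependent ℝ ![ω₁, ω₂]) :
    (∃ F : ℂ → ℂ, MixedForm ν μ (⇑ρ) τ ω₁ ω₂ F ∧ F ≠ 0) ↔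
      (∀ γ γ' : ℂ, inLattice ω₁ ω₂ γ → inLattice ω₁ ω₂ γ' →
        ∃ n : ℤ, (1 / Real.pi) * phiRho ν μ (⇑ρ) ⟨1, γ⟩ ⟨1, γ'⟩ = (n : ℝ)) :=
  statement6_general ν μ ρ τ hτ hequiv ω₁ ω₂ hω
end
end

section
/- For k ∈ ℕ define the eigenprojector kernel K_k(z,w) = (2B/π)·exp(−i(φ(z)−φ(w)))·exp(2iB·Im⟨z,w⟩)·exp(−B|z−w|²)·L_k(2B|z−w|²). Then for every g ∈ G and all z, w ∈ ℂ one has the invariance property K_k(z,w) = exp(−i((φ(z)−φ(w)) − (φ(g·z)−φ(g·w))))·exp(2iB·Im⟨z−w, g⁻¹·0⟩)·K_k(g·z, g·w). -/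
/-!
`g = [a,b]` acts on `ℂ` as a rigid motion, `g·z - g·w = a (z - w)`, so it preserves the radial
factor `exp(-B|z-w|²) L_k(2B|z-w|²)` of `K_k`. The magnetic phase `exp(2iB Im⟨z,w⟩)` is not
invariant, but `Im⟨z,w⟩ = Im⟨z - w, g⁻¹·0⟩ + Im⟨g·z, g·w⟩`, which produces the extra factor.
-/

noncomputable section

open Complex

open ComplexConjugate

namespace GT

lemma act_sub_act (g : GT) (z w : ℂ) : g.act z - g.act w = g.a * (z - w) := by
  simp only [act]; ring

lemma norm_act_sub_act (g : GT) (z w : ℂ) : ‖g.act z - g.act w‖ = ‖z - w‖ := by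
  rw [act_sub_act, norm_mul, Circle.norm_coe, one_mul]

lemma act_inv_zero (g : GT) : act g⁻¹ 0 = -(conj (g.a : ℂ) * g.b) := by
  show ((g.a⁻¹ : Circle) : ℂ) * 0 + -(((g.a⁻¹ : Circle) : ℂ) * g.b) = _
  rw [Circle.coe_inv_eq_conj]; ring

-- With `g = [a,b]`, `⟨g·z, g·w⟩ + ⟨z - w, g⁻¹·0⟩ - ⟨z, w⟩ = 2 Re(a w b̄) + |b|²` is real.
lemma im_herm_act_act (g : GT) (z w : ℂ) :
    (herm (g.act z) (g.act w)).im = (herm z w).im - (herm (z - w) (GT.act g⁻¹ 0)).im := by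
  have ha : (g.a : ℂ) * conj (g.a : ℂ) = 1 := by simp [Complex.mul_conj]
  have key : herm (g.act z) (g.act w) + herm (z - w) (GT.act g⁻¹ 0) = herm z w +
      ((g.a * w * conj g.b + conj (g.a * w * conj g.b)) + g.b * conj g.b) := by
    rw [act_inv_zero]
    simp only [herm, act, map_add, map_mul, map_neg, Complex.conj_conj]
    linear_combination (z * conj w) * ha
  have := congrArg Complex.im key
  simp only [Complex.add_im, Complex.add_conj, Complex.mul_conj, Complex.ofReal_im] at this
  linarith

end GT

theorem statement10_general (B : ℝ) (φ : ℂ → ℝ) (k : ℕ) (g : GT) (z w : ℂ) :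
    Kker B φ k z w =
      Complex.exp (-Complex.I *
          (((φ z - φ w) - (φ (GT.act g z) - φ (GT.act g w)) : ℝ) : ℂ)) *
        Complex.exp (2 * Complex.I * (B : ℂ) * ((herm (z - w) (GT.act g⁻¹ 0)).im : ℂ)) *
        Kker B φ k (GT.act g z) (GT.act g w) := by
  have phase : exp (-I * ((φ z - φ w : ℝ) : ℂ)) * exp (2 * I * B * ((herm z w).im : ℂ)) =
      exp (-I * (((φ z - φ w) - (φ (g.act z) - φ (g.act w)) : ℝ) : ℂ)) *
        exp (2 * I * B * ((herm (z - w) (GT.act g⁻¹ 0)).im : ℂ)) *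
        (exp (-I * ((φ (g.act z) - φ (g.act w) : ℝ) : ℂ)) *
          exp (2 * I * B * ((herm (g.act z) (g.act w)).im : ℂ))) := by
    simp only [← Complex.exp_add, GT.im_herm_act_act]
    push_cast; ring
  simp only [Kker, GT.norm_act_sub_act]
  linear_combination ((2 * B / Real.pi : ℝ) : ℂ) * exp (-((B * ‖z - w‖ ^ 2 : ℝ) : ℂ)) *
    ((laguerre k (2 * B * ‖z - w‖ ^ 2) : ℝ) : ℂ) * phase

theorem statement10 (B : ℝ) (hB : 0 < B) (φ : ℂ → ℝ) (k : ℕ) (g : GT) (z w : ℂ) :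
    Kker B φ k z w =
      Complex.exp (-Complex.I *
          (((φ z - φ w) - (φ (GT.act g z) - φ (GT.act g w)) : ℝ) : ℂ)) *
        Complex.exp (2 * Complex.I * (B : ℂ) * ((herm (z - w) (GT.act g⁻¹ 0)).im : ℂ)) *
        Kker B φ k (GT.act g z) (GT.act g w) :=
  statement10_general B φ k g z w
end
end
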